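/- arXiv:2306.17813 — 3 statements merged into one kernel-verified Lean document; each statement's English description precedes it below -/
import Mathlib

section
/- Let k ≥ 1, let b₁, …, b_k > 0 be real numbers, let 1 < β < s < t < γ with β > k + 2, and set B_j = max(b_j^{−1/β}, b_j^{−1/γ}). Let ν = (ν₁, …, ν_k) ∈ {0,1}^k with ν_k = 1 and with ν_i = 0 for at least one i; write I^ν for the set of q = (q₁,…,q_k) ∈ ℕ^k such that 1 ≤ q_j < r if ν_j = 0 and r < q_j < B_j r if ν_j = 1. For such r and q, define E(u; q/r) = ∑_{i=1}^k b_i (q_i/r)^u and J(q; r) = {α ∈ [s, t] : |E(α; q/r) − 1| ≤ r^{−β}}. Then for every real σ with max((k+1)/β, k/(β−2)) < σ < 1 and every integer M ≥ 1, the series ∑_{r ≥ M} ∑' (diam J(q; r))^σ converges, where ∑' ranges over those q ∈ I^ν for which the function u ↦ E(u; q/r) attains its global minimum over ℝ at some point u₀ with u₀ ≤ β. -/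
open scoped Classical

private lemma rpow_lin_le (x : ℝ) (hx : 0 < x) (u v : ℝ) :
    x ^ u * (1 + (v - u) * Real.log x) ≤ x ^ v := by
  have h1 : 1 + (v - u) * Real.log x ≤ Real.exp ((v - u) * Real.log x) := by
    have := Real.add_one_le_exp ((v - u) * Real.log x); linarith
  have h2 : x ^ u * (1 + (v - u) * Real.log x) ≤ x ^ u * Real.exp ((v - u) * Real.log x) :=
    mul_le_mul_of_nonneg_left h1 (Real.rpow_nonneg hx.le u)
  have h3 : x ^ u * Real.exp ((v - u) * Real.log x) = x ^ v := by
    rw [Real.rpow_def_of_pos hx u, Real.rpow_def_of_pos hx v, ← Real.exp_add]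
    congr 1; ring
  linarith [h3 ▸ h2]

private lemma rpow_mul_log_mono (x : ℝ) (hx : 0 < x) {u v : ℝ} (huv : u ≤ v) :
    x ^ u * Real.log x ≤ x ^ v * Real.log x := by
  rcases le_or_gt 1 x with h | h
  · exact mul_le_mul_of_nonneg_right (Real.rpow_le_rpow_of_exponent_le h huv) (Real.log_nonneg h)
  · exact mul_le_mul_of_nonpos_right (Real.rpow_le_rpow_of_exponent_ge hx h.le huv)
      (Real.log_nonpos hx.le h.le)

private lemma sum_rpow_neg_le (σ : ℝ) (hσ0 : 0 < σ) (hσ1 : σ < 1) :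
    ∀ N : ℕ, ∑ m ∈ Finset.range N, ((m : ℝ) + 1) ^ (-σ) ≤ (N : ℝ) ^ (1 - σ) / (1 - σ) := by
  intro N
  induction N with
  | zero =>
    rw [Finset.sum_range_zero, Nat.cast_zero,
      Real.zero_rpow (by linarith : (1:ℝ) - σ ≠ 0), zero_div]
  | succ N ih =>
    rw [Finset.sum_range_succ]
    set a : ℝ := (N : ℝ) with ha
    set A : ℝ := (N : ℝ) + 1 with hA
    have hA0 : (0 : ℝ) < A := by positivity
    have ha0 : (0 : ℝ) ≤ a := by positivity
    have hσ1' : (0:ℝ) < 1 - σ := by linarith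
    have hg : (a / A) ^ (1 - σ) * (1:ℝ) ^ σ ≤ (1 - σ) * (a / A) + σ * 1 :=
      Real.geom_mean_le_arith_mean2_weighted hσ1'.le hσ0.le (by positivity) zero_le_one (by ring)
    have e1 : (a / A) ^ (1 - σ) = a ^ (1 - σ) / A ^ (1 - σ) := Real.div_rpow ha0 hA0.le _
    have hApos : (0:ℝ) < A ^ (1 - σ) := Real.rpow_pos_of_pos hA0 _
    have e2 : A ^ (1 - σ) = A * A ^ (-σ) := by
      rw [show (1:ℝ) - σ = 1 + (-σ) by ring, Real.rpow_add hA0, Real.rpow_one]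
    have h4 : a ^ (1 - σ) ≤ ((1 - σ) * (a / A) + σ) * A ^ (1 - σ) := by
      rw [e1] at hg
      have := (div_le_iff₀ hApos).mp (by simpa using hg)
      linarith [this]
    have e3 : ((1 - σ) * (a / A) + σ) * A ^ (1 - σ) =
        (1 - σ) * (a * A ^ (-σ)) + σ * (A * A ^ (-σ)) := by
      rw [e2]; field_simp
    have hAa : A = a + 1 := by rw [hA, ha]
    have key : A ^ (-σ) ≤ (A ^ (1 - σ) - a ^ (1 - σ)) / (1 - σ) := by
      rw [le_div_iff₀ hσ1']
      have : a ^ (1 - σ) ≤ (1 - σ) * (a * A ^ (-σ)) + σ * (A * A ^ (-σ)) := by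
        rw [← e3]; exact h4
      nlinarith [this, e2, Real.rpow_pos_of_pos hA0 (-σ)]
    have hcast : ((N + 1 : ℕ) : ℝ) = A := by push_cast; rw [hA]
    rw [hcast]
    calc (∑ m ∈ Finset.range N, ((m:ℝ)+1) ^ (-σ)) + A ^ (-σ)
        ≤ a ^ (1-σ)/(1-σ) + (A ^ (1-σ) - a ^ (1-σ))/(1-σ) := by
          exact add_le_add ih key
      _ = A ^ (1-σ)/(1-σ) := by ring

private lemma col_gt (σ : ℝ) (hσ0 : 0 < σ) (hσ1 : σ < 1) (r N : ℕ) :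
    ∑ y ∈ Finset.range N, (if r < y then ((y : ℝ) - (r : ℝ)) ^ (-σ) else 0)
      ≤ (N : ℝ) ^ (1 - σ) / (1 - σ) := by
  have hσ1' : (0:ℝ) < 1 - σ := by linarith
  rcases le_or_gt N (r + 1) with h | h
  · have hz : ∀ y ∈ Finset.range N,
        (if r < y then ((y : ℝ) - (r : ℝ)) ^ (-σ) else 0) = 0 := by
      intro y hy
      rw [if_neg]
      have := Finset.mem_range.mp hy
      omega
    rw [Finset.sum_congr rfl hz, Finset.sum_const, smul_zero]
    positivity
  · rw [Finset.range_eq_Ico, ← Finset.sum_Ico_consecutive _ (Nat.zero_le (r + 1)) h.le]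
    have h0 : ∑ y ∈ Finset.Ico 0 (r + 1),
        (if r < y then ((y : ℝ) - (r : ℝ)) ^ (-σ) else 0) = 0 := by
      apply Finset.sum_eq_zero
      intro y hy
      rw [if_neg]
      have := (Finset.mem_Ico.mp hy).2
      omega
    rw [h0, zero_add, Finset.sum_Ico_eq_sum_range]
    have he : ∀ i ∈ Finset.range (N - (r + 1)),
        (if r < r + 1 + i then (((r + 1 + i : ℕ) : ℝ) - (r : ℝ)) ^ (-σ) else 0)
          = ((i : ℝ) + 1) ^ (-σ) := by
      intro i _
      rw [if_pos (by omega)]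
      congr 1
      push_cast
      ring
    rw [Finset.sum_congr rfl he]
    calc ∑ i ∈ Finset.range (N - (r + 1)), ((i : ℝ) + 1) ^ (-σ)
        ≤ ((N - (r + 1) : ℕ) : ℝ) ^ (1 - σ) / (1 - σ) := sum_rpow_neg_le σ hσ0 hσ1 _
      _ ≤ (N : ℝ) ^ (1 - σ) / (1 - σ) := by
          apply (div_le_div_iff_of_pos_right hσ1').mpr
          exact Real.rpow_le_rpow (by positivity)
            (Nat.cast_le.mpr (Nat.sub_le N (r + 1))) hσ1'.le

private lemma col_lt (σ : ℝ) (hσ0 : 0 < σ) (hσ1 : σ < 1) (r N : ℕ) (hrN : r ≤ N) :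
    ∑ y ∈ Finset.range N, (if y < r then ((r : ℝ) - (y : ℝ)) ^ (-σ) else 0)
      ≤ (r : ℝ) ^ (1 - σ) / (1 - σ) := by
  have hσ1' : (0:ℝ) < 1 - σ := by linarith
  rw [Finset.range_eq_Ico, ← Finset.sum_Ico_consecutive _ (Nat.zero_le r) hrN]
  have h0 : ∑ y ∈ Finset.Ico r N,
      (if y < r then ((r : ℝ) - (y : ℝ)) ^ (-σ) else 0) = 0 := by
    apply Finset.sum_eq_zero
    intro y hy
    rw [if_neg]
    have := (Finset.mem_Ico.mp hy).1
    omega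
  rw [h0, add_zero, ← Finset.range_eq_Ico]
  have he : ∀ y ∈ Finset.range r,
      (if y < r then ((r : ℝ) - (y : ℝ)) ^ (-σ) else 0) = ((r : ℝ) - (y : ℝ)) ^ (-σ) := by
    intro y hy
    exact if_pos (Finset.mem_range.mp hy)
  rw [Finset.sum_congr rfl he]
  have hrefl := Finset.sum_range_reflect (fun y => ((r : ℝ) - (y : ℝ)) ^ (-σ)) r
  rw [← hrefl]
  have he2 : ∀ j ∈ Finset.range r,
      ((r : ℝ) - ((r - 1 - j : ℕ) : ℝ)) ^ (-σ) = ((j : ℝ) + 1) ^ (-σ) := by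
    intro j hj
    have hj' := Finset.mem_range.mp hj
    congr 1
    have : ((r - 1 - j : ℕ) : ℝ) = (r : ℝ) - 1 - (j : ℝ) := by
      have h1 : j + 1 ≤ r := hj'
      push_cast [Nat.cast_sub (by omega : 1 + j ≤ r), Nat.sub_sub]
      ring
    rw [this]; ring
  rw [Finset.sum_congr rfl he2]
  exact sum_rpow_neg_le σ hσ0 hσ1 r

private noncomputable def PP (k : ℕ) (b x : Fin k → ℝ) (S : Finset (Fin k)) (u : ℝ) : ℝ :=
  ∑ j ∈ S, b j * (x j ^ u * Real.log (x j))

private lemma key_diam (k : ℕ) (b : Fin k → ℝ) (hb : ∀ j, 0 < b j)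
    (β s t : ℝ) (h2 : β < s) (hs0 : 0 ≤ s)
    (x : Fin k → ℝ) (hx : ∀ j, 0 < x j)
    (ν : Fin k → Bool) (κ i : Fin k) (hκ : ν κ = true) (hiF : ν i = false)
    (hT : ∀ j, ν j = true → 1 < x j)
    (hFmax : ∀ j, ν j = false → x j ≤ x i) (hxi : x i < 1)
    (hmin : ∃ u₀ : ℝ, u₀ ≤ β ∧ ∀ u : ℝ, ∑ j, b j * x j ^ u₀ ≤ ∑ j, b j * x j ^ u)
    (ε m₀ : ℝ) (hε : 0 ≤ ε) (hm₀ : 0 < m₀)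
    (hm₀le : m₀ ≤ (1 - (x i) ^ ((s - β) / 2)) * (b κ * (x κ ^ s * Real.log (x κ)))) :
    Metric.diam {α ∈ Set.Icc s t | |(∑ j, b j * x j ^ α) - 1| ≤ ε} ≤ 2 * ε / m₀ := by
  obtain ⟨u₀, hu₀β, hu₀min⟩ := hmin
  have hθ0 : 0 < x i := hx i
  set θ : ℝ := x i with hθdef
  set δ₀ : ℝ := (s - β) / 2 with hδ₀
  set v : ℝ := (β + s) / 2 with hvdef
  have hδ₀pos : 0 < δ₀ := by rw [hδ₀]; linarith
  have hv1 : u₀ < v := by rw [hvdef]; linarith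
  have hv2 : v + δ₀ = s := by rw [hvdef, hδ₀]; ring
  -- step1 : linear lower bound on E v - E u
  have step1 : ∀ u w : ℝ, (∑ j, b j * x j ^ u) + (w - u) * PP k b x Finset.univ u
      ≤ ∑ j, b j * x j ^ w := by
    intro u w
    have h := fun j : Fin k =>
      mul_le_mul_of_nonneg_left (rpow_lin_le (x j) (hx j) u w) (hb j).le
    calc (∑ j, b j * x j ^ u) + (w - u) * PP k b x Finset.univ u
        = ∑ j, b j * (x j ^ u * (1 + (w - u) * Real.log (x j))) := by
          rw [PP, Finset.mul_sum, ← Finset.sum_add_distrib]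
          exact Finset.sum_congr rfl (fun j _ => by ring)
      _ ≤ ∑ j, b j * x j ^ w := Finset.sum_le_sum (fun j _ => h j)
  -- D v ≥ 0
  have hDv : 0 ≤ PP k b x Finset.univ v := by
    by_contra hneg
    push_neg at hneg
    have h1 := step1 v u₀
    have h2 := hu₀min v
    have h3 : 0 < (u₀ - v) * PP k b x Finset.univ v :=
      mul_pos_of_neg_of_neg (by linarith) hneg
    linarith
  set T : Finset (Fin k) := Finset.univ.filter (fun j => ν j = true) with hTdef
  set F : Finset (Fin k) := Finset.univ.filter (fun j => ν j = false) with hFdef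
  have hsplitD : ∀ u : ℝ, PP k b x Finset.univ u = PP k b x T u + PP k b x F u := by
    intro u
    rw [PP, ← Finset.sum_filter_add_sum_filter_not Finset.univ (fun j => ν j = true)]
    congr 1
    apply Finset.sum_congr _ (fun _ _ => rfl)
    apply Finset.filter_congr
    intro j _
    simp
  have hκT : κ ∈ T := by rw [hTdef]; simp [hκ]
  have hiFF : i ∈ F := by rw [hFdef]; simp [hiF]
  have hPmono : ∀ u w : ℝ, u ≤ w → PP k b x T u ≤ PP k b x T w := by
    intro u w huw
    exact Finset.sum_le_sum (fun j _ =>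
      mul_le_mul_of_nonneg_left (rpow_mul_log_mono (x j) (hx j) huw) (hb j).le)
  have hTnonneg : ∀ α : ℝ, ∀ j ∈ T, 0 ≤ b j * (x j ^ α * Real.log (x j)) := by
    intro α j hj
    have h1x : 1 < x j := hT j (by rw [hTdef] at hj; exact (Finset.mem_filter.mp hj).2)
    exact mul_nonneg (hb j).le (mul_nonneg (Real.rpow_nonneg (hx j).le α)
      (Real.log_nonneg h1x.le))
  have hPsingle : ∀ α : ℝ, s ≤ α →
      b κ * (x κ ^ s * Real.log (x κ)) ≤ PP k b x T α := by
    intro α hα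
    calc b κ * (x κ ^ s * Real.log (x κ))
        ≤ b κ * (x κ ^ α * Real.log (x κ)) :=
          mul_le_mul_of_nonneg_left (rpow_mul_log_mono (x κ) (hx κ) hα) (hb κ).le
      _ ≤ PP k b x T α := Finset.single_le_sum (hTnonneg α) hκT
  have hθ1 : θ < 1 := hxi
  have hNbound : ∀ α : ℝ, s ≤ α →
      θ ^ δ₀ * PP k b x F v ≤ PP k b x F α := by
    intro α hα
    rw [PP, PP, Finset.mul_sum]
    apply Finset.sum_le_sum
    intro j hj
    have hjF : ν j = false := by rw [hFdef] at hj; exact (Finset.mem_filter.mp hj).2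
    have hxj1 : x j < 1 := lt_of_le_of_lt (hFmax j hjF) hxi
    have hlog : Real.log (x j) ≤ 0 := Real.log_nonpos (hx j).le hxj1.le
    have hxα : x j ^ α ≤ θ ^ δ₀ * x j ^ v := by
      have e1 : x j ^ α = x j ^ v * x j ^ (α - v) := by
        rw [← Real.rpow_add (hx j)]; congr 1; ring
      have e2 : x j ^ (α - v) ≤ θ ^ (α - v) :=
        Real.rpow_le_rpow (hx j).le (hFmax j hjF) (by linarith)
      have e3 : θ ^ (α - v) ≤ θ ^ δ₀ :=
        Real.rpow_le_rpow_of_exponent_ge hθ0 hθ1.le (by linarith)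
      calc x j ^ α = x j ^ v * x j ^ (α - v) := e1
        _ ≤ x j ^ v * θ ^ δ₀ := by
            apply mul_le_mul_of_nonneg_left (e2.trans e3) (Real.rpow_nonneg (hx j).le v)
        _ = θ ^ δ₀ * x j ^ v := by ring
    have hbl : b j * Real.log (x j) ≤ 0 := mul_nonpos_of_nonneg_of_nonpos (hb j).le hlog
    have h := mul_le_mul_of_nonpos_right hxα hbl
    calc θ ^ δ₀ * (b j * (x j ^ v * Real.log (x j)))
        = θ ^ δ₀ * x j ^ v * (b j * Real.log (x j)) := by ring
      _ ≤ x j ^ α * (b j * Real.log (x j)) := h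
      _ = b j * (x j ^ α * Real.log (x j)) := by ring
  have hθd0 : 0 ≤ θ ^ δ₀ := Real.rpow_nonneg hθ0.le δ₀
  have hD : ∀ α : ℝ, s ≤ α → m₀ ≤ PP k b x Finset.univ α := by
    intro α hα
    have f2 := hPsingle α hα
    have f3 : 0 ≤ b κ * (x κ ^ s * Real.log (x κ)) := by
      have h1x : 1 < x κ := hT κ hκ
      exact mul_nonneg (hb κ).le (mul_nonneg (Real.rpow_nonneg (hx κ).le s)
        (Real.log_nonneg h1x.le))
    have f4 := hNbound α hα
    have f5 : 0 ≤ PP k b x T v + PP k b x F v := by rw [← hsplitD]; exact hDv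
    have f6 := hPmono v α (by linarith)
    have g1 : (1 - θ ^ δ₀) * (b κ * (x κ ^ s * Real.log (x κ)))
        ≤ (1 - θ ^ δ₀) * PP k b x T α := by
      apply mul_le_mul_of_nonneg_left f2
      have : θ ^ δ₀ ≤ 1 := Real.rpow_le_one hθ0.le hθ1.le hδ₀pos.le
      linarith
    have g2 : θ ^ δ₀ * PP k b x T v ≤ θ ^ δ₀ * PP k b x T α :=
      mul_le_mul_of_nonneg_left f6 hθd0
    have g3 : θ ^ δ₀ * (-(PP k b x F v)) ≤ θ ^ δ₀ * PP k b x T v :=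
      mul_le_mul_of_nonneg_left (by linarith) hθd0
    have e1 : (1 - θ ^ δ₀) * PP k b x T α
        = PP k b x T α - θ ^ δ₀ * PP k b x T α := by ring
    have e2 : θ ^ δ₀ * (-(PP k b x F v)) = -(θ ^ δ₀ * PP k b x F v) := by ring
    rw [hsplitD]
    linarith
  -- final diam bound
  apply Metric.diam_le_of_forall_dist_le (by positivity)
  have main : ∀ a c : ℝ, a ∈ {α ∈ Set.Icc s t | |(∑ j, b j * x j ^ α) - 1| ≤ ε}
      → c ∈ {α ∈ Set.Icc s t | |(∑ j, b j * x j ^ α) - 1| ≤ ε} → a ≤ c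
      → c - a ≤ 2 * ε / m₀ := by
    intro a c ha hc hac
    obtain ⟨haI, haE⟩ := ha
    obtain ⟨hcI, hcE⟩ := hc
    have hDa := hD a haI.1
    have hstep := step1 a c
    have habs1 := abs_le.mp haE
    have habs2 := abs_le.mp hcE
    have h1 : (c - a) * PP k b x Finset.univ a ≤ 2 * ε := by linarith
    have h2 : (c - a) * m₀ ≤ (c - a) * PP k b x Finset.univ a :=
      mul_le_mul_of_nonneg_left hDa (by linarith)
    rw [le_div_iff₀ hm₀]
    linarith
  intro a ha c hc
  rw [Real.dist_eq, abs_sub_le_iff]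
  rcases le_total a c with h | h
  · constructor
    · linarith [main a c ha hc h, div_nonneg (by linarith : (0:ℝ) ≤ 2 * ε) hm₀.le]
    · linarith [main a c ha hc h]
  · constructor
    · linarith [main c a hc ha h]
    · linarith [main c a hc ha h, div_nonneg (by linarith : (0:ℝ) ≤ 2 * ε) hm₀.le]

private noncomputable def gfun (k : ℕ) (σ : ℝ) (r : ℕ) (κ i j : Fin k) (y : ℕ) : ℝ :=
  if j = κ then (if r < y then ((y : ℝ) - (r : ℝ)) ^ (-σ) else 0)
  else if j = i then (if y < r then ((r : ℝ) - (y : ℝ)) ^ (-σ) else 0) else 1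

private lemma gfun_nonneg (k : ℕ) (σ : ℝ) (r : ℕ) (κ i j : Fin k) (y : ℕ) :
    0 ≤ gfun k σ r κ i j y := by
  rw [gfun]
  split_ifs with h1 h2 h3 h4
  · exact Real.rpow_nonneg (by have h : (r:ℝ) < y := by exact_mod_cast h2
                               linarith) _
  · exact le_refl 0
  · exact Real.rpow_nonneg (by have h : (y:ℝ) < r := by exact_mod_cast h4
                               linarith) _
  · exact le_refl 0
  · exact zero_le_one

private lemma gfun_col_sum {k : ℕ} (σ : ℝ) (hσ0 : 0 < σ) (hσ1 : σ < 1)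
    (r N : ℕ) (hr : 1 ≤ r) (hrN : r ≤ N) (κ i j : Fin k) (hiκ : i ≠ κ)
    (c : ℝ) (hc : 1 ≤ c) (hN : (N : ℝ) ≤ c * r) :
    ∑ y ∈ Finset.range N, gfun k σ r κ i j y
      ≤ (c * (1 + 1 / (1 - σ))) *
        (r : ℝ) ^ (if j = κ then 1 - σ else if j = i then 1 - σ else (1 : ℝ)) := by
  have h1σ : (0:ℝ) < 1 - σ := by linarith
  have hR0 : (0:ℝ) < r := by exact_mod_cast hr
  have hrp : (0:ℝ) ≤ (r:ℝ) ^ (1 - σ) := Real.rpow_nonneg hR0.le _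
  have hinv : 1 / (1 - σ) ≤ 1 + 1 / (1 - σ) := by linarith
  have hinv0 : 0 ≤ 1 / (1 - σ) := by positivity
  by_cases hjκ : j = κ
  · rw [if_pos hjκ]
    have he : ∀ y ∈ Finset.range N, gfun k σ r κ i j y
        = (if r < y then ((y : ℝ) - (r : ℝ)) ^ (-σ) else 0) := by
      intro y _; rw [gfun, if_pos hjκ]
    rw [Finset.sum_congr rfl he]
    calc ∑ y ∈ Finset.range N, (if r < y then ((y : ℝ) - (r : ℝ)) ^ (-σ) else 0)
        ≤ (N : ℝ) ^ (1 - σ) / (1 - σ) := col_gt σ hσ0 hσ1 r N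
      _ ≤ (c * (r:ℝ)) ^ (1 - σ) / (1 - σ) := by
          have h : (N:ℝ) ^ (1-σ) ≤ (c*(r:ℝ)) ^ (1-σ) :=
            Real.rpow_le_rpow (by positivity) hN h1σ.le
          exact (div_le_div_iff_of_pos_right h1σ).mpr h
      _ ≤ (c * (1 + 1 / (1 - σ))) * (r : ℝ) ^ (1 - σ) := by
          have h0c : (0:ℝ) ≤ c := by linarith
          have e : (c*(r:ℝ)) ^ (1-σ) = c ^ (1-σ) * (r:ℝ) ^ (1-σ) :=
            Real.mul_rpow h0c hR0.le
          have hcc : c ^ (1-σ) ≤ c := by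
            have h' := Real.rpow_le_rpow_of_exponent_le hc (by linarith : 1-σ ≤ 1)
            rwa [Real.rpow_one] at h'
          rw [e, div_eq_mul_one_div]
          have m1 : c ^ (1-σ) * (r:ℝ) ^ (1-σ) ≤ c * (r:ℝ) ^ (1-σ) :=
            mul_le_mul_of_nonneg_right hcc hrp
          nlinarith [mul_le_mul_of_nonneg_right m1 hinv0, mul_nonneg h0c hrp]
  · rw [if_neg hjκ]
    by_cases hji : j = i
    · rw [if_pos hji]
      have he : ∀ y ∈ Finset.range N, gfun k σ r κ i j y
          = (if y < r then ((r : ℝ) - (y : ℝ)) ^ (-σ) else 0) := by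
        intro y _; rw [gfun, if_neg hjκ, if_pos hji]
      rw [Finset.sum_congr rfl he]
      calc ∑ y ∈ Finset.range N, (if y < r then ((r : ℝ) - (y : ℝ)) ^ (-σ) else 0)
          ≤ (r : ℝ) ^ (1 - σ) / (1 - σ) := col_lt σ hσ0 hσ1 r N hrN
        _ ≤ (c * (1 + 1 / (1 - σ))) * (r : ℝ) ^ (1 - σ) := by
            rw [div_eq_mul_one_div]
            have h' : (1:ℝ) * (1/(1-σ)) ≤ c * (1 + 1/(1-σ)) := by nlinarith
            nlinarith [mul_le_mul_of_nonneg_right h' hrp]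
    · rw [if_neg hji]
      have he : ∀ y ∈ Finset.range N, gfun k σ r κ i j y = 1 := by
        intro y _; rw [gfun, if_neg hjκ, if_neg hji]
      rw [Finset.sum_congr rfl he, Finset.sum_const, Finset.card_range, Real.rpow_one,
        nsmul_eq_mul, mul_one]
      calc (N : ℝ) ≤ c * r := hN
        _ ≤ (c * (1 + 1 / (1 - σ))) * r := by nlinarith

set_option maxHeartbeats 2000000

/-- Case 3.1: let `k ≥ 1`, `b₁, …, b_k > 0`, `1 < β < s < t < γ` with `β > k + 2`,
`B_j = max(b_j^{−1/β}, b_j^{−1/γ})`, and `ν ∈ {0,1}^k` with `ν_k = 1` and some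
`ν_i = 0`. For `max((k+1)/β, k/(β−2)) < σ < 1` and `M ≥ 1`, the series
`∑_{r ≥ M} ∑' (diam J(q;r))^σ` converges, where `∑'` ranges over those `q ∈ I^ν`
for which `u ↦ E(u; q/r)` attains its global minimum at some `u₀ ≤ β`. -/
theorem statement16 (k : ℕ) (hk : 1 ≤ k) (b : Fin k → ℝ) (hb : ∀ j, 0 < b j)
    (β s t γ : ℝ) (h1 : 1 < β) (hβ : (k : ℝ) + 2 < β) (h2 : β < s) (h3 : s < t)
    (h4 : t < γ)
    (ν : Fin k → Bool) (hν1 : ν ⟨k - 1, Nat.sub_lt hk one_pos⟩ = true)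
    (hν0 : ∃ i, ν i = false)
    (σ : ℝ) (hσ1 : max (((k : ℝ) + 1) / β) ((k : ℝ) / (β - 2)) < σ) (hσ2 : σ < 1)
    (M : ℕ) (hM : 1 ≤ M) :
    Summable (fun r : ℕ => if M ≤ r then
      ∑ q ∈ Fintype.piFinset (fun j : Fin k =>
          Finset.range (Nat.ceil (max (b j ^ (-1 / β)) (b j ^ (-1 / γ)) * (r : ℝ)) + r + 1)),
        if ((∀ j, (ν j = false → 1 ≤ q j ∧ q j < r) ∧
              (ν j = true → r < q j ∧
                (q j : ℝ) < max (b j ^ (-1 / β)) (b j ^ (-1 / γ)) * (r : ℝ))) ∧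
            ∃ u₀ : ℝ, u₀ ≤ β ∧ ∀ u : ℝ,
              ∑ j, b j * ((q j : ℝ) / (r : ℝ)) ^ u₀ ≤
                ∑ j, b j * ((q j : ℝ) / (r : ℝ)) ^ u)
        then (Metric.diam {α ∈ Set.Icc s t |
            |∑ j, b j * ((q j : ℝ) / (r : ℝ)) ^ α - 1| ≤ (r : ℝ) ^ (-β)}) ^ σ
        else 0
      else 0) := by
  classical
  set κ : Fin k := ⟨k - 1, Nat.sub_lt hk one_pos⟩ with hκdef
  have hκν : ν κ = true := hν1
  obtain ⟨i₀, hi₀⟩ := hν0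
  have hi₀κ : i₀ ≠ κ := by
    intro h
    rw [h, hκν] at hi₀
    exact Bool.noConfusion hi₀
  have hk2 : 2 ≤ k := by
    by_contra hlt
    push_neg at hlt
    apply hi₀κ
    apply Fin.ext
    have h1' := i₀.isLt
    have h2' : κ.val = k - 1 := rfl
    omega
  have hβ0 : (0:ℝ) < β := by linarith
  have hσβ : ((k:ℝ)+1)/β < σ := lt_of_le_of_lt (le_max_left _ _) hσ1
  have hσ0 : 0 < σ := lt_trans (by positivity) hσβ
  have hexp : (k:ℝ) - β*σ < -1 := by
    have h := (div_lt_iff₀ hβ0).mp hσβ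
    nlinarith
  have h1σ : (0:ℝ) < 1 - σ := by linarith
  have hBpos : ∀ j, 0 < max (b j ^ (-1/β)) (b j ^ (-1/γ)) := fun j =>
    lt_of_lt_of_le (Real.rpow_pos_of_pos (hb j) _) (le_max_left _ _)
  set δ' : ℝ := min ((s-β)/2) 1 with hδ'def
  have hδ'0 : 0 < δ' := lt_min (by linarith) one_pos
  have hδ'1 : δ' ≤ 1 := min_le_right _ _
  set C₀ : ℝ := 2 * max (b κ ^ (-1/β)) (b κ ^ (-1/γ)) / (δ' * b κ) with hC₀def
  have hC₀0 : 0 < C₀ := by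
    rw [hC₀def]
    exact div_pos (by have := hBpos κ; linarith) (mul_pos hδ'0 (hb κ))
  set G : Fin k → ℝ := fun j =>
    (max (b j ^ (-1/β)) (b j ^ (-1/γ)) + 3) * (1 + 1/(1-σ)) with hGdef
  have hG0 : ∀ j, 0 ≤ G j := fun j => by
    rw [hGdef]
    have := hBpos j
    positivity
  have hGprod0 : 0 ≤ ∏ j, G j := Finset.prod_nonneg (fun j _ => hG0 j)
  set K : ℝ := (k:ℝ) * (C₀ ^ σ * ∏ j, G j) with hKdef
  have hK0 : 0 ≤ K := by
    rw [hKdef]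
    have h' := Real.rpow_nonneg hC₀0.le σ
    positivity
  apply Summable.of_nonneg_of_le (f := fun r : ℕ => K * (r:ℝ) ^ ((k:ℝ) - β*σ)) ?hnn ?hle
    ((Real.summable_nat_rpow.mpr hexp).mul_left K)
  case hnn =>
    intro r
    by_cases hMr : M ≤ r
    · rw [if_pos hMr]
      refine Finset.sum_nonneg (fun q _ => ?_)
      split_ifs
      · exact Real.rpow_nonneg Metric.diam_nonneg σ
      · exact le_refl 0
    · rw [if_neg hMr]
  case hle =>
    intro r
    by_cases hMr : M ≤ r
    swap
    · rw [if_neg hMr]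
      exact mul_nonneg hK0 (Real.rpow_nonneg (Nat.cast_nonneg r) _)
    rw [if_pos hMr]
    have hr1 : 1 ≤ r := le_trans hM hMr
    have hR0 : (0:ℝ) < r := by exact_mod_cast hr1
    set F : Finset (Fin k) := Finset.univ.filter (fun i => ν i = false) with hFdef
    have hi₀F : i₀ ∈ F := by rw [hFdef]; simp [hi₀]
    have hC₁0 : 0 ≤ C₀ ^ σ * (r:ℝ) ^ (((2:ℝ)-β)*σ) :=
      mul_nonneg (Real.rpow_nonneg hC₀0.le σ) (Real.rpow_nonneg hR0.le _)
    -- column upper bounds on sizes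
    have hNub : ∀ j : Fin k,
        ((Nat.ceil (max (b j ^ (-1 / β)) (b j ^ (-1 / γ)) * (r : ℝ)) + r + 1 : ℕ) : ℝ)
          ≤ (max (b j ^ (-1/β)) (b j ^ (-1/γ)) + 3) * r := by
      intro j
      have hBr0 : (0:ℝ) ≤ max (b j ^ (-1/β)) (b j ^ (-1/γ)) * r := by
        have := hBpos j; positivity
      have hceil : (Nat.ceil (max (b j ^ (-1/β)) (b j ^ (-1/γ)) * (r:ℝ)) : ℝ)
          < max (b j ^ (-1/β)) (b j ^ (-1/γ)) * r + 1 := Nat.ceil_lt_add_one hBr0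
      have hr1' : (1:ℝ) ≤ r := by exact_mod_cast hr1
      push_cast
      nlinarith [hBpos j]
    have hNlb : ∀ j : Fin k,
        r ≤ Nat.ceil (max (b j ^ (-1 / β)) (b j ^ (-1 / γ)) * (r : ℝ)) + r + 1 :=
      fun j => by omega
    -- product of R-powers over an index set
    have hRprod : ∀ i : Fin k, i ≠ κ →
        ∏ j, (r:ℝ) ^ (if j = κ then 1 - σ else if j = i then 1 - σ else (1:ℝ))
          = (r:ℝ) ^ ((k:ℝ) - 2*σ) := by
      intro i hiκ
      rw [← Finset.mul_prod_erase Finset.univ _ (Finset.mem_univ κ), if_pos rfl,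
        ← Finset.mul_prod_erase _ _ (Finset.mem_erase.mpr ⟨hiκ, Finset.mem_univ i⟩),
        if_neg hiκ, if_pos rfl]
      have he : ∀ j ∈ (Finset.univ.erase κ).erase i,
          (r:ℝ) ^ (if j = κ then 1 - σ else if j = i then 1 - σ else (1:ℝ)) = (r:ℝ) := by
        intro j hj
        have hj1 : j ≠ i := (Finset.mem_erase.mp hj).1
        have hj2 : j ≠ κ := (Finset.mem_erase.mp (Finset.mem_erase.mp hj).2).1
        rw [if_neg hj2, if_neg hj1, Real.rpow_one]
      rw [Finset.prod_congr rfl he, Finset.prod_const]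
      have hcard : ((Finset.univ.erase κ).erase i).card = k - 2 := by
        rw [Finset.card_erase_of_mem (Finset.mem_erase.mpr ⟨hiκ, Finset.mem_univ i⟩),
          Finset.card_erase_of_mem (Finset.mem_univ κ), Finset.card_univ, Fintype.card_fin]
        omega
      rw [hcard, ← Real.rpow_natCast (r:ℝ) (k-2), ← Real.rpow_add hR0, ← Real.rpow_add hR0]
      congr 1
      push_cast [Nat.cast_sub hk2]
      ring
    have hcolnn : ∀ (i j : Fin k), 0 ≤ ∑ y ∈ Finset.range
        (Nat.ceil (max (b j ^ (-1 / β)) (b j ^ (-1 / γ)) * (r : ℝ)) + r + 1),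
        gfun k σ r κ i j y :=
      fun i j => Finset.sum_nonneg (fun y _ => gfun_nonneg k σ r κ i j y)
    have hprodbound : ∀ i ∈ F, (∏ j, ∑ y ∈ Finset.range
        (Nat.ceil (max (b j ^ (-1 / β)) (b j ^ (-1 / γ)) * (r : ℝ)) + r + 1),
        gfun k σ r κ i j y) ≤ (∏ j, G j) * (r:ℝ) ^ ((k:ℝ) - 2*σ) := by
      intro i hi
      have hiν : ν i = false := by rw [hFdef] at hi; exact (Finset.mem_filter.mp hi).2
      have hiκ : i ≠ κ := by intro h; rw [h, hκν] at hiν; exact Bool.noConfusion hiν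
      calc (∏ j, ∑ y ∈ Finset.range
            (Nat.ceil (max (b j ^ (-1 / β)) (b j ^ (-1 / γ)) * (r : ℝ)) + r + 1),
            gfun k σ r κ i j y)
          ≤ ∏ j, (G j * (r:ℝ) ^ (if j = κ then 1 - σ else if j = i then 1 - σ else (1:ℝ))) := by
            apply Finset.prod_le_prod (fun j _ => hcolnn i j)
            intro j _
            have h := gfun_col_sum σ hσ0 hσ2 r _ hr1 (hNlb j) κ i j hiκ
              (max (b j ^ (-1/β)) (b j ^ (-1/γ)) + 3) (by have := hBpos j; linarith) (hNub j)
            calc (∑ y ∈ Finset.range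
                (Nat.ceil (max (b j ^ (-1 / β)) (b j ^ (-1 / γ)) * (r : ℝ)) + r + 1),
                gfun k σ r κ i j y)
                ≤ ((max (b j ^ (-1/β)) (b j ^ (-1/γ)) + 3) * (1 + 1/(1-σ))) *
                  (r:ℝ) ^ (if j = κ then 1 - σ else if j = i then 1 - σ else (1:ℝ)) := h
              _ = G j * (r:ℝ) ^ (if j = κ then 1 - σ else if j = i then 1 - σ else (1:ℝ)) := by
                  rw [hGdef]
        _ = (∏ j, G j) *
            ∏ j, (r:ℝ) ^ (if j = κ then 1 - σ else if j = i then 1 - σ else (1:ℝ)) :=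
            Finset.prod_mul_distrib
        _ = (∏ j, G j) * (r:ℝ) ^ ((k:ℝ) - 2*σ) := by rw [hRprod i hiκ]
    -- per-q bound
    have stepA : ∀ q : Fin k → ℕ,
        (if ((∀ j, (ν j = false → 1 ≤ q j ∧ q j < r) ∧
              (ν j = true → r < q j ∧
                (q j : ℝ) < max (b j ^ (-1 / β)) (b j ^ (-1 / γ)) * (r : ℝ))) ∧
            ∃ u₀ : ℝ, u₀ ≤ β ∧ ∀ u : ℝ,
              ∑ j, b j * ((q j : ℝ) / (r : ℝ)) ^ u₀ ≤
                ∑ j, b j * ((q j : ℝ) / (r : ℝ)) ^ u)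
        then (Metric.diam {α ∈ Set.Icc s t |
            |∑ j, b j * ((q j : ℝ) / (r : ℝ)) ^ α - 1| ≤ (r : ℝ) ^ (-β)}) ^ σ
        else 0)
        ≤ ∑ i ∈ F, (C₀ ^ σ * (r:ℝ) ^ (((2:ℝ)-β)*σ)) * ∏ j, gfun k σ r κ i j (q j) := by
      intro q
      split_ifs with hcond
      swap
      · exact Finset.sum_nonneg (fun i _ => mul_nonneg hC₁0
          (Finset.prod_nonneg (fun j _ => gfun_nonneg k σ r κ i j (q j))))
      obtain ⟨hq1, hmin⟩ := hcond
      obtain ⟨im, himF, himax⟩ := Finset.exists_max_image F (fun i => q i) ⟨i₀, hi₀F⟩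
      have himν : ν im = false := by rw [hFdef] at himF; exact (Finset.mem_filter.mp himF).2
      have himκ : im ≠ κ := by intro h; rw [h, hκν] at himν; exact Bool.noConfusion himν
      have hqim := (hq1 im).1 himν
      have hqκ := (hq1 κ).2 hκν
      have hqimR : ((q im:ℝ)) + 1 ≤ (r:ℝ) := by exact_mod_cast hqim.2
      have hqκR : (r:ℝ) + 1 ≤ (q κ:ℝ) := by exact_mod_cast hqκ.1
      have hqim0 : (0:ℝ) < q im := by
        have h' : (1:ℝ) ≤ q im := by exact_mod_cast hqim.1
        linarith
      have hqκ0 : (0:ℝ) < q κ := by linarith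
      set Bκ : ℝ := max (b κ ^ (-1/β)) (b κ ^ (-1/γ)) with hBκdef
      have hBκ0 : 0 < Bκ := hBpos κ
      have hBκr : (q κ:ℝ) ≤ Bκ * r := hqκ.2.le
      have hx : ∀ j, 0 < (q j:ℝ)/(r:ℝ) := by
        intro j
        apply div_pos ?_ hR0
        have h1' : 1 ≤ q j := by
          rcases Bool.eq_false_or_eq_true (ν j) with h | h
          · have := ((hq1 j).2 h).1; omega
          · exact ((hq1 j).1 h).1
        have h2' : (1:ℝ) ≤ q j := by exact_mod_cast h1'
        linarith
      have hT : ∀ j, ν j = true → 1 < (q j:ℝ)/(r:ℝ) := by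
        intro j h
        exact (one_lt_div hR0).mpr (by exact_mod_cast ((hq1 j).2 h).1)
      have hFmax : ∀ j, ν j = false → (q j:ℝ)/(r:ℝ) ≤ (q im:ℝ)/(r:ℝ) := by
        intro j h
        have hle : q j ≤ q im := himax j (by rw [hFdef]; simp [h])
        have hle' : ((q j:ℝ)) ≤ ((q im:ℝ)) := by exact_mod_cast hle
        gcongr
      have hxim : (q im:ℝ)/(r:ℝ) < 1 := (div_lt_one hR0).mpr (by linarith)
      have hθ0 : 0 < (q im:ℝ)/(r:ℝ) := hx im
      set m₀ : ℝ := (δ' * (((r:ℝ) - (q im:ℝ))/(r:ℝ))) *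
        (b κ * (((q κ:ℝ) - (r:ℝ))/(Bκ * (r:ℝ)))) with hm₀def
      have hm₀pos : 0 < m₀ := by
        rw [hm₀def]
        exact mul_pos (mul_pos hδ'0 (div_pos (by linarith) hR0))
          (mul_pos (hb κ) (div_pos (by linarith) (by positivity)))
      have hθδ : ((q im:ℝ)/(r:ℝ)) ^ ((s-β)/2) ≤ ((q im:ℝ)/(r:ℝ)) ^ δ' :=
        Real.rpow_le_rpow_of_exponent_ge hθ0 hxim.le (min_le_left _ _)
      have hgm : ((q im:ℝ)/(r:ℝ)) ^ δ' * (1:ℝ) ^ (1-δ') ≤ δ' * ((q im:ℝ)/(r:ℝ)) + (1-δ') * 1 :=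
        Real.geom_mean_le_arith_mean2_weighted hδ'0.le (by linarith) hθ0.le zero_le_one
          (by ring)
      rw [Real.one_rpow, mul_one, mul_one] at hgm
      have hA : δ' * (((r:ℝ) - (q im:ℝ))/(r:ℝ)) ≤ 1 - ((q im:ℝ)/(r:ℝ)) ^ ((s-β)/2) := by
        have e : ((r:ℝ) - (q im:ℝ))/(r:ℝ) = 1 - (q im:ℝ)/(r:ℝ) := by field_simp
        rw [e]
        nlinarith [hθδ, hgm]
      have hA0 : 0 ≤ δ' * (((r:ℝ) - (q im:ℝ))/(r:ℝ)) :=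
        mul_nonneg hδ'0.le (div_nonneg (by linarith) hR0.le)
      have hlogκ : ((q κ:ℝ) - (r:ℝ))/(Bκ*(r:ℝ)) ≤ Real.log ((q κ:ℝ)/(r:ℝ)) := by
        have hxκ0 : 0 < (q κ:ℝ)/(r:ℝ) := hx κ
        have h := Real.log_le_sub_one_of_pos (inv_pos.mpr hxκ0)
        rw [Real.log_inv, inv_div] at h
        have e : 1 - (r:ℝ)/(q κ:ℝ) = ((q κ:ℝ) - (r:ℝ))/(q κ:ℝ) := by field_simp
        have hstep : ((q κ:ℝ) - (r:ℝ))/(Bκ*(r:ℝ)) ≤ ((q κ:ℝ) - (r:ℝ))/(q κ:ℝ) :=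
          div_le_div_of_nonneg_left (by linarith) hqκ0 hBκr
        linarith [e.le, e.ge]
      have hxκs : 1 ≤ ((q κ:ℝ)/(r:ℝ)) ^ s := by
        have hh := Real.rpow_le_rpow_of_exponent_le (hT κ hκν).le (show (0:ℝ) ≤ s by linarith)
        rwa [Real.rpow_zero] at hh
      have hdiv0 : 0 ≤ ((q κ:ℝ) - (r:ℝ))/(Bκ*(r:ℝ)) := div_nonneg (by linarith) (by positivity)
      have hB : b κ * (((q κ:ℝ) - (r:ℝ))/(Bκ*(r:ℝ)))
          ≤ b κ * (((q κ:ℝ)/(r:ℝ)) ^ s * Real.log ((q κ:ℝ)/(r:ℝ))) := by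
        apply mul_le_mul_of_nonneg_left ?_ (hb κ).le
        calc ((q κ:ℝ) - (r:ℝ))/(Bκ*(r:ℝ)) = 1 * (((q κ:ℝ) - (r:ℝ))/(Bκ*(r:ℝ))) :=
              (one_mul _).symm
          _ ≤ ((q κ:ℝ)/(r:ℝ)) ^ s * Real.log ((q κ:ℝ)/(r:ℝ)) :=
              mul_le_mul hxκs hlogκ hdiv0 (Real.rpow_nonneg (hx κ).le s)
      have hB0 : 0 ≤ b κ * (((q κ:ℝ) - (r:ℝ))/(Bκ*(r:ℝ))) := mul_nonneg (hb κ).le hdiv0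
      have hm₀le : m₀ ≤ (1 - ((q im:ℝ)/(r:ℝ)) ^ ((s-β)/2)) *
          (b κ * (((q κ:ℝ)/(r:ℝ)) ^ s * Real.log ((q κ:ℝ)/(r:ℝ)))) := by
        rw [hm₀def]
        exact mul_le_mul hA hB hB0 (le_trans hA0 hA)
      have hdiam := key_diam k b hb β s t h2 (by linarith : (0:ℝ) ≤ s)
        (fun j => (q j:ℝ)/(r:ℝ)) hx ν κ im hκν himν hT hFmax hxim hmin
        ((r:ℝ)^(-β)) m₀ (Real.rpow_nonneg hR0.le _) hm₀pos hm₀le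
      have ha0 : (0:ℝ) ≤ (q κ:ℝ) - (r:ℝ) := by linarith
      have hc0 : (0:ℝ) ≤ (r:ℝ) - (q im:ℝ) := by linarith
      have hval : 2 * ((r:ℝ)^(-β)) / m₀ = C₀ * ((r:ℝ)^((2:ℝ)-β)) *
          ((((q κ:ℝ) - (r:ℝ))⁻¹) * (((r:ℝ) - (q im:ℝ))⁻¹)) := by
        have hrpw : (r:ℝ)^((2:ℝ)-β) = (r:ℝ)^(-β) * (r:ℝ) * (r:ℝ) := by
          rw [show (2:ℝ) - β = -β + 1 + 1 by ring, Real.rpow_add hR0, Real.rpow_add hR0,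
            Real.rpow_one]
        have h1' : (r:ℝ) ≠ 0 := hR0.ne'
        have h2' : b κ ≠ 0 := (hb κ).ne'
        have h3' : δ' ≠ 0 := hδ'0.ne'
        have h4' : Bκ ≠ 0 := hBκ0.ne'
        have h5' : ((q κ:ℝ) - (r:ℝ)) ≠ 0 := ne_of_gt (by linarith)
        have h6' : ((r:ℝ) - (q im:ℝ)) ≠ 0 := ne_of_gt (by linarith)
        rw [hm₀def, hC₀def, hrpw]
        field_simp
      have heq : (2 * ((r:ℝ)^(-β)) / m₀) ^ σ = (C₀ ^ σ * (r:ℝ)^(((2:ℝ)-β)*σ)) *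
          (((q κ:ℝ) - (r:ℝ)) ^ (-σ) * (((r:ℝ) - (q im:ℝ)) ^ (-σ) * 1)) := by
        rw [hval]
        rw [Real.mul_rpow (mul_nonneg hC₀0.le (Real.rpow_nonneg hR0.le _))
          (mul_nonneg (inv_nonneg.mpr ha0) (inv_nonneg.mpr hc0))]
        rw [Real.mul_rpow hC₀0.le (Real.rpow_nonneg hR0.le _)]
        rw [Real.mul_rpow (inv_nonneg.mpr ha0) (inv_nonneg.mpr hc0)]
        rw [← Real.rpow_mul hR0.le]
        rw [Real.inv_rpow ha0, Real.inv_rpow hc0, ← Real.rpow_neg ha0, ← Real.rpow_neg hc0]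
        ring
      have hprodg : ∏ j, gfun k σ r κ im j (q j)
          = ((q κ:ℝ) - (r:ℝ)) ^ (-σ) * (((r:ℝ) - (q im:ℝ)) ^ (-σ) * 1) := by
        rw [← Finset.mul_prod_erase Finset.univ _ (Finset.mem_univ κ)]
        congr 1
        · rw [gfun, if_pos rfl, if_pos hqκ.1]
        rw [← Finset.mul_prod_erase _ _ (Finset.mem_erase.mpr ⟨himκ, Finset.mem_univ im⟩)]
        congr 1
        · rw [gfun, if_neg himκ, if_pos rfl, if_pos hqim.2]
        apply Finset.prod_eq_one
        intro j hj
        have hj1 : j ≠ im := (Finset.mem_erase.mp hj).1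
        have hj2 : j ≠ κ := (Finset.mem_erase.mp (Finset.mem_erase.mp hj).2).1
        rw [gfun, if_neg hj2, if_neg hj1]
      calc (Metric.diam {α ∈ Set.Icc s t |
            |∑ j, b j * ((q j : ℝ) / (r : ℝ)) ^ α - 1| ≤ (r : ℝ) ^ (-β)}) ^ σ
          ≤ (2 * ((r:ℝ)^(-β)) / m₀) ^ σ :=
            Real.rpow_le_rpow Metric.diam_nonneg hdiam hσ0.le
        _ = (C₀ ^ σ * (r:ℝ)^(((2:ℝ)-β)*σ)) * ∏ j, gfun k σ r κ im j (q j) := by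
            rw [heq, hprodg]
        _ ≤ ∑ i ∈ F, (C₀ ^ σ * (r:ℝ)^(((2:ℝ)-β)*σ)) * ∏ j, gfun k σ r κ i j (q j) :=
            Finset.single_le_sum (fun i _ => mul_nonneg hC₁0
              (Finset.prod_nonneg (fun j _ => gfun_nonneg k σ r κ i j (q j)))) himF
    refine le_trans (Finset.sum_le_sum (fun q _ => stepA q)) ?_
    rw [Finset.sum_comm]
    have hinner : ∀ i ∈ F, (∑ q ∈ Fintype.piFinset (fun j : Fin k =>
        Finset.range (Nat.ceil (max (b j ^ (-1 / β)) (b j ^ (-1 / γ)) * (r : ℝ)) + r + 1)),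
        (C₀ ^ σ * (r:ℝ) ^ (((2:ℝ)-β)*σ)) * ∏ j, gfun k σ r κ i j (q j))
        ≤ (C₀ ^ σ * (r:ℝ) ^ (((2:ℝ)-β)*σ)) * ((∏ j, G j) * (r:ℝ) ^ ((k:ℝ) - 2*σ)) := by
      intro i hi
      rw [← Finset.mul_sum]
      have hswap : (∑ q ∈ Fintype.piFinset (fun j : Fin k =>
          Finset.range (Nat.ceil (max (b j ^ (-1 / β)) (b j ^ (-1 / γ)) * (r : ℝ)) + r + 1)),
          ∏ j, gfun k σ r κ i j (q j))
          = ∏ j, ∑ y ∈ Finset.range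
            (Nat.ceil (max (b j ^ (-1 / β)) (b j ^ (-1 / γ)) * (r : ℝ)) + r + 1),
            gfun k σ r κ i j y := (Finset.prod_univ_sum _ _).symm
      rw [hswap]
      exact mul_le_mul_of_nonneg_left (hprodbound i hi) hC₁0
    refine le_trans (Finset.sum_le_sum hinner) ?_
    rw [Finset.sum_const, nsmul_eq_mul]
    have hcard : (F.card : ℝ) ≤ (k:ℝ) := by
      have h' : F.card ≤ k := by
        rw [hFdef]
        simpa using Finset.card_filter_le Finset.univ (fun i => ν i = false)
      exact_mod_cast h'
    have hpw : (r:ℝ)^(((2:ℝ)-β)*σ) * (r:ℝ)^((k:ℝ)-2*σ) = (r:ℝ)^((k:ℝ)-β*σ) := by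
      rw [← Real.rpow_add hR0]
      congr 1
      ring
    calc (F.card:ℝ) * ((C₀ ^ σ * (r:ℝ)^(((2:ℝ)-β)*σ)) * ((∏ j, G j) * (r:ℝ)^((k:ℝ)-2*σ)))
        ≤ (k:ℝ) * ((C₀ ^ σ * (r:ℝ)^(((2:ℝ)-β)*σ)) * ((∏ j, G j) * (r:ℝ)^((k:ℝ)-2*σ))) := by
          apply mul_le_mul_of_nonneg_right hcard
          exact mul_nonneg hC₁0 (mul_nonneg hGprod0 (Real.rpow_nonneg hR0.le _))
      _ = K * (r:ℝ)^((k:ℝ)-β*σ) := by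
          rw [hKdef, ← hpw]
          ring
end

section
/- Let k ≥ 1, let b₁, …, b_k > 0 be real numbers, let 1 < β < s < t < γ, and set B_j = max(b_j^{−1/β}, b_j^{−1/γ}). There exist constants C > 0 and M₀ > 0 (depending only on b₁,…,b_k, β, s, t, γ, k) such that the following holds. Let r ≥ M₀ be an integer, let X be a real number with 2r^{−β} < X < b_k/(2r), and let q = (q₁,…,q_k) ∈ ℕ^k satisfy 1 ≤ q_j < B_j r and q_j ≠ r for all j, with r < q_k < B_k r. Write E(u) = ∑_{i=1}^k b_i (q_i/r)^u, and suppose that E attains its global minimum over ℝ at a point u₀ ∈ (β, γ) with minimum value m = E(u₀), and that m ∈ [1 − X, 1 + r^{−β}]. Then the diameter of J(q; r) = {α ∈ [s, t] : |E(α) − 1| ≤ r^{−β}} is at most C · r · X^{1/2}. -/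
lemma rpow_midpoint_le (c : ℝ) (hc : 0 < c) (x y : ℝ) :
    c ^ ((x + y) / 2) ≤ (c ^ x + c ^ y) / 2 := by
  rw [Real.rpow_def_of_pos hc, Real.rpow_def_of_pos hc, Real.rpow_def_of_pos hc]
  set L := Real.log c
  have e1 : Real.exp (L * x / 2) * Real.exp (L * x / 2) = Real.exp (L * x) := by
    rw [← Real.exp_add]; ring_nf
  have e2 : Real.exp (L * y / 2) * Real.exp (L * y / 2) = Real.exp (L * y) := by
    rw [← Real.exp_add]; ring_nf
  have e3 : Real.exp (L * x / 2) * Real.exp (L * y / 2)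
      = Real.exp (L * ((x + y) / 2)) := by
    rw [← Real.exp_add]; ring_nf
  nlinarith [sq_nonneg (Real.exp (L * x / 2) - Real.exp (L * y / 2)), e1, e2, e3]

lemma rpow_midpoint_gap (c : ℝ) (hc : 1 < c) (x y : ℝ) (hx : 0 ≤ x) (hxy : x ≤ y) :
    c ^ ((x + y) / 2) + (Real.log c * (y - x) / 2) ^ 2 / 2 ≤ (c ^ x + c ^ y) / 2 := by
  have hc0 : 0 < c := lt_trans one_pos hc
  rw [Real.rpow_def_of_pos hc0, Real.rpow_def_of_pos hc0, Real.rpow_def_of_pos hc0]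
  have hL : 0 < Real.log c := Real.log_pos hc
  set L := Real.log c with hLdef
  set A := Real.exp (L * x / 2) with hA
  set B := Real.exp (L * y / 2) with hB
  have e1 : A * A = Real.exp (L * x) := by rw [hA, ← Real.exp_add]; ring_nf
  have e2 : B * B = Real.exp (L * y) := by rw [hB, ← Real.exp_add]; ring_nf
  have e3 : A * B = Real.exp (L * ((x + y) / 2)) := by rw [hA, hB, ← Real.exp_add]; ring_nf
  have hA1 : 1 ≤ A := Real.one_le_exp (by positivity)
  have hd2 : 0 ≤ L * (y - x) / 2 :=
    div_nonneg (mul_nonneg hL.le (sub_nonneg.2 hxy)) (by norm_num)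
  have hE1 : 1 + L * (y - x) / 2 ≤ Real.exp (L * (y - x) / 2) := by
    linarith [Real.add_one_le_exp (L * (y - x) / 2)]
  have h2 : B = A * Real.exp (L * (y - x) / 2) := by
    rw [hA, hB, ← Real.exp_add]; ring_nf
  have hgap : L * (y - x) / 2 ≤ B - A := by
    nlinarith [hE1, hA1, hd2, mul_nonneg (sub_nonneg.2 hA1)
      (by linarith : (0:ℝ) ≤ Real.exp (L * (y - x) / 2) - 1)]
  have hsq : (L * (y - x) / 2) ^ 2 ≤ (B - A) ^ 2 := pow_le_pow_left₀ hd2 hgap 2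
  nlinarith [hsq, e1, e2, e3]

set_option maxHeartbeats 2000000 in

/-- Case 3.3.1: let `k ≥ 1`, `b₁, …, b_k > 0`, `1 < β < s < t < γ`,
`B_j = max(b_j^{−1/β}, b_j^{−1/γ})`. There are `C > 0` and `M₀ > 0` such that for all
integers `r ≥ M₀`, all reals `X` with `2r^{−β} < X < b_k/(2r)`, and all `q ∈ ℕ^k`
with `1 ≤ q_j < B_j r`, `q_j ≠ r` for all `j` and `r < q_k`: if
`E(u) = ∑ b_j (q_j/r)^u` attains its global minimum over `ℝ` at `u₀ ∈ (β, γ)` with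
minimum value `m = E(u₀) ∈ [1 − X, 1 + r^{−β}]`, then
`diam J(q;r) ≤ C · r · X^{1/2}` where
`J(q;r) = {α ∈ [s,t] : |E(α) − 1| ≤ r^{−β}}`. -/
theorem statement18 (k : ℕ) (hk : 1 ≤ k) (b : Fin k → ℝ) (hb : ∀ j, 0 < b j)
    (β s t γ : ℝ) (h1 : 1 < β) (h2 : β < s) (h3 : s < t) (h4 : t < γ) :
    ∃ C : ℝ, 0 < C ∧ ∃ M₀ : ℝ, 0 < M₀ ∧ ∀ r : ℕ, M₀ ≤ (r : ℝ) →
      ∀ lst : Fin k, (lst : ℕ) = k - 1 →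
      ∀ X : ℝ, 2 * (r : ℝ) ^ (-β) < X → X < b lst / (2 * (r : ℝ)) →
      ∀ q : Fin k → ℕ,
        (∀ j, 1 ≤ q j ∧
          (q j : ℝ) < max (b j ^ (-1 / β)) (b j ^ (-1 / γ)) * (r : ℝ) ∧ q j ≠ r) →
        r < q lst →
      ∀ u₀ ∈ Set.Ioo β γ,
        (∀ u : ℝ, ∑ j, b j * ((q j : ℝ) / (r : ℝ)) ^ u₀ ≤
            ∑ j, b j * ((q j : ℝ) / (r : ℝ)) ^ u) →
        1 - X ≤ ∑ j, b j * ((q j : ℝ) / (r : ℝ)) ^ u₀ →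
        ∑ j, b j * ((q j : ℝ) / (r : ℝ)) ^ u₀ ≤ 1 + (r : ℝ) ^ (-β) →
        Metric.diam {α ∈ Set.Icc s t |
            |∑ j, b j * ((q j : ℝ) / (r : ℝ)) ^ α - 1| ≤ (r : ℝ) ^ (-β)} ≤
          C * (r : ℝ) * Real.sqrt X := by
  have hne : (Finset.univ : Finset (Fin k)).Nonempty := ⟨⟨0, hk⟩, Finset.mem_univ _⟩
  set bmin := Finset.univ.inf' hne b with hbmin_def
  have hbmin : 0 < bmin := (Finset.lt_inf'_iff hne).2 fun j _ => hb j
  clear_value bmin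
  refine ⟨Real.sqrt (48 / bmin), Real.sqrt_pos.2 (by positivity), 1, one_pos, ?_⟩
  intro r hr lst _hlst X hX1 _hX2 q hq hqlst u₀ _hu₀ hmin hm1 hm2
  set R := (r : ℝ) with hRdef
  have hR1 : (1:ℝ) ≤ R := hr
  clear_value R
  have hR0 : (0:ℝ) < R := lt_of_lt_of_le one_pos hr
  have hX0 : 0 < X := lt_trans (by positivity) hX1
  have hrX : R ^ (-β) < X / 2 := by linarith
  have hCnn : 0 ≤ Real.sqrt (48 / bmin) * R * Real.sqrt X :=
    mul_nonneg (mul_nonneg (Real.sqrt_nonneg _) hR0.le) (Real.sqrt_nonneg _)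
  apply Metric.diam_le_of_forall_dist_le hCnn
  suffices key : ∀ x ∈ {α ∈ Set.Icc s t |
      |∑ j, b j * ((q j : ℝ) / R) ^ α - 1| ≤ R ^ (-β)},
      ∀ y ∈ {α ∈ Set.Icc s t |
      |∑ j, b j * ((q j : ℝ) / R) ^ α - 1| ≤ R ^ (-β)}, x ≤ y →
      dist x y ≤ Real.sqrt (48 / bmin) * R * Real.sqrt X by
    intro x hx y hy
    rcases le_total x y with h | h
    · exact key x hx y hy h
    · rw [dist_comm]; exact key y hy x hx h
  intro x hx y hy hxy
  obtain ⟨⟨hxs, hxt⟩, hxE⟩ := hx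
  obtain ⟨⟨hys, hyt⟩, hyE⟩ := hy
  have hx0 : 0 ≤ x := by linarith
  set w := (x + y) / 2 with hw
  set d := y - x with hd
  have hd0 : 0 ≤ d := sub_nonneg.2 hxy
  clear_value w d
  -- the big term
  have hqlstR : R + 1 ≤ (q lst : ℝ) := by
    have h := Nat.succ_le_of_lt hqlst
    have h2 : ((r + 1 : ℕ) : ℝ) ≤ ((q lst : ℕ) : ℝ) := Nat.cast_le.2 h
    push_cast at h2
    rw [hRdef]; linarith
  set c := (q lst : ℝ) / R with hc
  clear_value c
  have hc1 : 1 < c := by rw [hc, lt_div_iff₀ hR0]; linarith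
  have hc0 : 0 < c := lt_trans one_pos hc1
  have hcR2 : R + 1 ≤ c * R := by
    rw [hc, div_mul_cancel₀ _ (ne_of_gt hR0)]; exact hqlstR
  have hL : 1 / (2 * R) ≤ Real.log c := by
    have hI : 0 < c⁻¹ := inv_pos.2 hc0
    have hinv : c * c⁻¹ = 1 := mul_inv_cancel₀ (ne_of_gt hc0)
    have h1 : 1 - c⁻¹ ≤ Real.log c := by
      have := Real.log_le_sub_one_of_pos (inv_pos.2 hc0)
      rw [Real.log_inv] at this; linarith
    have hIcR : c⁻¹ * (c * R) = R := by field_simp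
    have h3 : c⁻¹ * (R + 1) ≤ R := by
      nlinarith [mul_le_mul_of_nonneg_left hcR2 hI.le]
    have hI1 : c⁻¹ ≤ 1 := by nlinarith
    have h4 : 1 ≤ (1 - c⁻¹) * (2 * R) := by nlinarith [h3, hR1, hI1]
    rw [div_le_iff₀ (by positivity : (0:ℝ) < 2 * R)]
    nlinarith [mul_le_mul_of_nonneg_right h1 (by positivity : (0:ℝ) ≤ 2 * R), h4]
  -- midpoint inequality with gap, summed
  have key2 : (∑ j, b j * ((q j : ℝ) / R) ^ w) + b lst * (d ^ 2 / (32 * R ^ 2)) ≤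
      ((∑ j, b j * ((q j : ℝ) / R) ^ x) + ∑ j, b j * ((q j : ℝ) / R) ^ y) / 2 := by
    have step : ∀ j : Fin k,
        b j * ((q j : ℝ) / R) ^ w + (if j = lst then b lst * (d ^ 2 / (32 * R ^ 2)) else 0)
          ≤ (b j * ((q j : ℝ) / R) ^ x + b j * ((q j : ℝ) / R) ^ y) / 2 := by
      intro j
      have hqj : (0:ℝ) < (q j : ℝ) := by exact_mod_cast (hq j).1
      have hcj : 0 < (q j : ℝ) / R := div_pos hqj hR0
      by_cases hj : j = lst
      · subst hj
        rw [if_pos rfl, ← hc]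
        have hgap := rpow_midpoint_gap c hc1 x y hx0 hxy
        rw [← hw, ← hd] at hgap
        have hsq : (d / (4 * R)) ^ 2 ≤ (Real.log c * d / 2) ^ 2 := by
          apply pow_le_pow_left₀ (div_nonneg hd0 (by positivity))
          have hm := mul_le_mul_of_nonneg_right hL hd0
          have h5 : d / (4 * R) = 1 / (2 * R) * d / 2 := by ring
          linarith
        have hdd : (d / (4 * R)) ^ 2 = d ^ 2 / (16 * R ^ 2) := by
          rw [div_pow]; congr 1; ring
        rw [hdd] at hsq
        have hgap' := mul_le_mul_of_nonneg_left hgap (hb j).le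
        have hq2 : b j * (d ^ 2 / (32 * R ^ 2)) ≤
            b j * ((Real.log c * d / 2) ^ 2 / 2) := by
          apply mul_le_mul_of_nonneg_left ?_ (hb j).le
          have h6 : d ^ 2 / (16 * R ^ 2) / 2 = d ^ 2 / (32 * R ^ 2) := by ring
          linarith
        have h7 : b j * (c ^ w + (Real.log c * d / 2) ^ 2 / 2) =
            b j * c ^ w + b j * ((Real.log c * d / 2) ^ 2 / 2) := by ring
        have h8 : b j * ((c ^ x + c ^ y) / 2) = (b j * c ^ x + b j * c ^ y) / 2 := by
          ring
        linarith [hgap', hq2]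
      · rw [if_neg hj, add_zero]
        have hmle := rpow_midpoint_le _ hcj x y
        rw [← hw] at hmle
        nlinarith [mul_le_mul_of_nonneg_left hmle (hb j).le]
    have hsum := Finset.sum_le_sum (fun j (_ : j ∈ Finset.univ) => step j)
    rw [Finset.sum_add_distrib, Finset.sum_ite_eq' Finset.univ lst
      (fun _ => b lst * (d ^ 2 / (32 * R ^ 2)))] at hsum
    simp only [Finset.mem_univ, if_pos] at hsum
    calc (∑ j, b j * ((q j : ℝ) / R) ^ w) + b lst * (d ^ 2 / (32 * R ^ 2))
        ≤ ∑ j, (b j * ((q j : ℝ) / R) ^ x + b j * ((q j : ℝ) / R) ^ y) / 2 := hsum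
      _ = ((∑ j, b j * ((q j : ℝ) / R) ^ x) + ∑ j, b j * ((q j : ℝ) / R) ^ y) / 2 := by
          rw [← Finset.sum_div, Finset.sum_add_distrib]
  -- assemble
  have hEw := hmin w
  have hEx : ∑ j, b j * ((q j : ℝ) / R) ^ x ≤ 1 + R ^ (-β) := by
    have := abs_le.1 hxE; linarith [this.2]
  have hEy : ∑ j, b j * ((q j : ℝ) / R) ^ y ≤ 1 + R ^ (-β) := by
    have := abs_le.1 hyE; linarith [this.2]
  have key3 : b lst * (d ^ 2 / (32 * R ^ 2)) ≤ 3 / 2 * X := by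
    linarith only [key2, hEw, hEx, hEy, hm1, hrX]
  have key4 : b lst * d ^ 2 ≤ 48 * R ^ 2 * X := by
    rw [← mul_div_assoc, div_le_iff₀ (by positivity : (0:ℝ) < 32 * R ^ 2)] at key3
    linarith [key3]
  have hble : bmin ≤ b lst := by
    rw [hbmin_def]; exact Finset.inf'_le _ (Finset.mem_univ lst)
  have key5 : d ^ 2 ≤ 48 / bmin * R ^ 2 * X := by
    rw [show 48 / bmin * R ^ 2 * X = 48 * R ^ 2 * X / bmin by ring,
      le_div_iff₀ hbmin]
    nlinarith [mul_le_mul_of_nonneg_right hble (sq_nonneg d), key4]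
  have hfin : d ≤ Real.sqrt (48 / bmin) * R * Real.sqrt X := by
    have h48 : (48 / bmin) * R ^ 2 * X = (Real.sqrt (48 / bmin) * R * Real.sqrt X) ^ 2 := by
      rw [mul_pow, mul_pow, Real.sq_sqrt (by positivity : (0:ℝ) ≤ 48 / bmin),
        Real.sq_sqrt hX0.le]
    rw [h48] at key5
    calc d = Real.sqrt (d ^ 2) := (Real.sqrt_sq hd0).symm
      _ ≤ Real.sqrt ((Real.sqrt (48 / bmin) * R * Real.sqrt X) ^ 2) :=
          Real.sqrt_le_sqrt key5
      _ = Real.sqrt (48 / bmin) * R * Real.sqrt X := Real.sqrt_sq hCnn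
  rw [Real.dist_eq, abs_sub_comm, ← hd, abs_of_nonneg hd0]
  exact hfin
end

section
/- Let k ≥ 1, let b₁, …, b_k > 0 be real numbers, let 1 < β < s < t < γ, and set B_j = max(b_j^{−1/β}, b_j^{−1/γ}). There exist constants C > 0 and M₀ > 0 (depending only on b₁,…,b_k, β, s, t, γ, k, and in particular not on ℓ below) such that the following holds. Let r ≥ M₀ be an integer, let X be a real number with 2r^{−β} < X < b_k/(2r), and let q = (q₁,…,q_k) ∈ ℕ^k satisfy 1 ≤ q_j < B_j r and q_j ≠ r for all j, with r < q_k < B_k r. Write E(u) = ∑_{i=1}^k b_i (q_i/r)^u, suppose E attains its global minimum over ℝ at a point u₀ ∈ (β, γ) with minimum value m = E(u₀), and suppose m < 1 − X. Define J₁ = {α ∈ [s, t] : α ≤ u₀ and |E(α) − 1| ≤ r^{−β}} and J₂ = {α ∈ [s, t] : α ≥ u₀ and |E(α) − 1| ≤ r^{−β}}. Then for each i ∈ {1, 2}: (a) if m ∈ [1 − b_k/(2r), 1 − X], then diam Jᵢ ≤ C · r^{−β} (log r) X^{−1} (log(q_k/r))^{−2}; and (b) if m ∈ [1 − (ℓ+1)b_k/(2r),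 1 − ℓ b_k/(2r)] for some integer ℓ with 1 ≤ ℓ ≤ 2r/b_k, then diam Jᵢ ≤ C · r^{−β+1} (log r) ℓ^{−1} (log(q_k/r))^{−2}. -/
open Real Set

lemma conv_aux {k : ℕ} (b c : Fin k → ℝ) (hb : ∀ j, 0 ≤ b j) (hc : ∀ j, 0 < c j) :
    ConvexOn ℝ Set.univ (fun u : ℝ => ∑ j, b j * c j ^ u) := by
  classical
  have h1 : ∀ j : Fin k, ConvexOn ℝ Set.univ (fun u : ℝ => b j * c j ^ u) := by
    intro j
    have h2 : ConvexOn ℝ Set.univ (fun u : ℝ => Real.exp (u * Real.log (c j))) := by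
      have := convexOn_exp.comp_affineMap
        (LinearMap.toAffineMap (LinearMap.smulRight (LinearMap.id : ℝ →ₗ[ℝ] ℝ) (Real.log (c j))))
      simpa [Function.comp_def] using this
    have h3 : (fun u : ℝ => b j * c j ^ u)
        = fun u : ℝ => b j • Real.exp (u * Real.log (c j)) := by
      funext u
      rw [smul_eq_mul, mul_comm u (Real.log (c j)), ← Real.rpow_def_of_pos (hc j)]
    rw [h3]
    exact h2.smul (hb j)
  have h4 : ∀ s : Finset (Fin k), ConvexOn ℝ Set.univ (fun u : ℝ => ∑ j ∈ s, b j * c j ^ u) := by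
    intro s
    induction s using Finset.induction_on with
    | empty => simpa using convexOn_const (0:ℝ) convex_univ
    | insert _ _ hj ih =>
        simp only [Finset.sum_insert hj]
        exact (h1 _).add ih
  exact h4 Finset.univ

lemma key_aux {E : ℝ → ℝ} (hconv : ConvexOn ℝ Set.univ E) {β γ u₀ ε m : ℝ}
    (hβu : β < u₀) (huγ : u₀ < γ) (hm : E u₀ = m) (hε : 0 ≤ ε)
    (hg : 0 < 1 - ε - m)
    {α₁ α₂ : ℝ} (h1β : β < α₁) (h1γ : α₁ < γ) (h2β : β < α₂) (h2γ : α₂ < γ)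
    (h1E : |E α₁ - 1| ≤ ε) (h2E : |E α₂ - 1| ≤ ε) (h12 : α₁ ≤ α₂)
    (hside : α₂ ≤ u₀ ∨ u₀ ≤ α₁) :
    (α₂ - α₁) * (1 - ε - m) ≤ 2 * ε * (γ - β) := by
  obtain ⟨e1l, e1u⟩ := abs_le.mp h1E
  obtain ⟨e2l, e2u⟩ := abs_le.mp h2E
  rcases eq_or_lt_of_le h12 with rfl | hlt
  · nlinarith
  rcases hside with h | h
  · have hne : α₂ < u₀ := by
      rcases eq_or_lt_of_le h with rfl | h'
      · exfalso; rw [hm] at e2l e2u; linarith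
      · exact h'
    have hs := hconv.slope_mono_adjacent (Set.mem_univ α₁) (Set.mem_univ u₀) hlt hne
    rw [div_le_div_iff₀ (by linarith) (by linarith), hm] at hs
    have t1 : (m - E α₂) * (α₂ - α₁) ≤ -((1 - ε - m) * (α₂ - α₁)) := by nlinarith
    have t2 : (E α₂ - E α₁) * (u₀ - α₂) ≤ -((1 - ε - m) * (α₂ - α₁)) := le_trans hs t1
    have hE21 : E α₂ - E α₁ < 0 := by nlinarith [mul_pos hg (sub_pos.mpr hlt)]
    have h2e : E α₁ - E α₂ ≤ 2 * ε := by linarith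
    have huu : u₀ - α₂ ≤ γ - β := by linarith
    nlinarith [mul_le_mul h2e huu (by linarith) (by linarith)]
  · have hne : u₀ < α₁ := by
      rcases eq_or_lt_of_le h with rfl | h'
      · exfalso; rw [hm] at e1l e1u; linarith
      · exact h'
    have hs := hconv.slope_mono_adjacent (Set.mem_univ u₀) (Set.mem_univ α₂) hne hlt
    rw [div_le_div_iff₀ (by linarith) (by linarith), hm] at hs
    have t1 : (1 - ε - m) * (α₂ - α₁) ≤ (E α₁ - m) * (α₂ - α₁) := by nlinarith
    have t2 : (1 - ε - m) * (α₂ - α₁) ≤ (E α₂ - E α₁) * (α₁ - u₀) := le_trans t1 hs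
    have hE21 : 0 < E α₂ - E α₁ := by nlinarith [mul_pos hg (sub_pos.mpr hlt)]
    have h2e : E α₂ - E α₁ ≤ 2 * ε := by linarith
    have huu : α₁ - u₀ ≤ γ - β := by linarith
    nlinarith [mul_le_mul h2e huu (by linarith) (by linarith)]

set_option maxHeartbeats 1000000 in
/-- Case 3.3.3: let `k ≥ 1`, `b₁, …, b_k > 0`, `1 < β < s < t < γ`,
`B_j = max(b_j^{−1/β}, b_j^{−1/γ})`. There are `C > 0` and `M₀ > 0` (independent of
`ℓ` below) such that for all integers `r ≥ M₀`, all reals `X` with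
`2r^{−β} < X < b_k/(2r)`, all `q ∈ ℕ^k` with `1 ≤ q_j < B_j r`, `q_j ≠ r` and
`r < q_k`: if `E(u) = ∑ b_j (q_j/r)^u` attains its global minimum over `ℝ` at
`u₀ ∈ (β, γ)` with minimum value `m = E(u₀) < 1 − X`, and
`J₁ = {α ∈ [s,t] : α ≤ u₀, |E(α) − 1| ≤ r^{−β}}`,
`J₂ = {α ∈ [s,t] : α ≥ u₀, |E(α) − 1| ≤ r^{−β}}`, then for each `i ∈ {1,2}`:
(a) if `m ∈ [1 − b_k/(2r), 1 − X]` then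
`diam Jᵢ ≤ C r^{−β} (log r) X^{−1} (log(q_k/r))^{−2}`, and
(b) if `m ∈ [1 − (ℓ+1)b_k/(2r), 1 − ℓb_k/(2r)]` for some `1 ≤ ℓ ≤ 2r/b_k` then
`diam Jᵢ ≤ C r^{−β+1} (log r) ℓ^{−1} (log(q_k/r))^{−2}`. -/
theorem statement19 (k : ℕ) (hk : 1 ≤ k) (b : Fin k → ℝ) (hb : ∀ j, 0 < b j)
    (β s t γ : ℝ) (h1 : 1 < β) (h2 : β < s) (h3 : s < t) (h4 : t < γ) :
    ∃ C : ℝ, 0 < C ∧ ∃ M₀ : ℝ, 0 < M₀ ∧ ∀ r : ℕ, M₀ ≤ (r : ℝ) →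
      ∀ lst : Fin k, (lst : ℕ) = k - 1 →
      ∀ X : ℝ, 2 * (r : ℝ) ^ (-β) < X → X < b lst / (2 * (r : ℝ)) →
      ∀ q : Fin k → ℕ,
        (∀ j, 1 ≤ q j ∧
          (q j : ℝ) < max (b j ^ (-1 / β)) (b j ^ (-1 / γ)) * (r : ℝ) ∧ q j ≠ r) →
        r < q lst →
      ∀ u₀ ∈ Set.Ioo β γ,
        (∀ u : ℝ, ∑ j, b j * ((q j : ℝ) / (r : ℝ)) ^ u₀ ≤
            ∑ j, b j * ((q j : ℝ) / (r : ℝ)) ^ u) →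
      ∀ m : ℝ, m = ∑ j, b j * ((q j : ℝ) / (r : ℝ)) ^ u₀ → m < 1 - X →
      ∀ J₁ J₂ : Set ℝ,
        J₁ = {α ∈ Set.Icc s t | α ≤ u₀ ∧
          |∑ j, b j * ((q j : ℝ) / (r : ℝ)) ^ α - 1| ≤ (r : ℝ) ^ (-β)} →
        J₂ = {α ∈ Set.Icc s t | u₀ ≤ α ∧
          |∑ j, b j * ((q j : ℝ) / (r : ℝ)) ^ α - 1| ≤ (r : ℝ) ^ (-β)} →
      ∀ J ∈ ({J₁, J₂} : Set (Set ℝ)),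
        ((1 - b lst / (2 * (r : ℝ)) ≤ m ∧ m ≤ 1 - X →
          Metric.diam J ≤
            C * ((r : ℝ) ^ (-β) * Real.log r /
              (X * (Real.log ((q lst : ℝ) / (r : ℝ))) ^ 2))) ∧
         (∀ ℓ : ℕ, 1 ≤ ℓ → (ℓ : ℝ) ≤ 2 * (r : ℝ) / b lst →
            1 - ((ℓ : ℝ) + 1) * b lst / (2 * (r : ℝ)) ≤ m →
            m ≤ 1 - (ℓ : ℝ) * b lst / (2 * (r : ℝ)) →
            Metric.diam J ≤
              C * ((r : ℝ) ^ (-β + 1) * Real.log r /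
                ((ℓ : ℝ) * (Real.log ((q lst : ℝ) / (r : ℝ))) ^ 2)))) := by
  have hk' : k - 1 < k := by omega
  have hγβ : (0:ℝ) < γ - β := by linarith
  set bK : ℝ := b ⟨k-1, hk'⟩ with hbKdef
  have hbK0 : 0 < bK := hb _
  set B : ℝ := max (bK ^ (-1/β)) (bK ^ (-1/γ)) with hBdef
  set C : ℝ := 4*(γ-β) + 8*(γ-β)/bK + 1 with hCdef
  have hC0 : 0 < C := by
    have h8 : 0 ≤ 8*(γ-β)/bK := div_nonneg (by nlinarith) hbK0.le
    have : 0 < 4*(γ-β) := by nlinarith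
    rw [hCdef]; linarith
  have hCa : 4*(γ-β) ≤ C := by
    have h8 : 0 ≤ 8*(γ-β)/bK := div_nonneg (by nlinarith) hbK0.le
    rw [hCdef]; linarith
  have hCb : 8*(γ-β) ≤ C * bK := by
    have : 8*(γ-β)/bK ≤ C := by
      have : 0 < 4*(γ-β) := by nlinarith
      rw [hCdef]; linarith
    calc 8*(γ-β) = 8*(γ-β)/bK * bK := by field_simp
    _ ≤ C * bK := mul_le_mul_of_nonneg_right this hbK0.le
  refine ⟨C, hC0, max 3 (max (Real.exp ((Real.log B)^2)) ((4/bK) ^ ((1:ℝ)/(β-1)))),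
    lt_of_lt_of_le (by norm_num) (le_max_left _ _), ?_⟩
  intro r hr lst hlst X hX1 hX2 q hq hqlst u₀ hu₀ hmin m hm hmX J₁ J₂ hJ₁ hJ₂ J hJ
  have hlst' : lst = ⟨k-1, hk'⟩ := Fin.ext hlst
  subst hlst'
  -- basic facts about r
  have hr3 : (3:ℝ) ≤ r := le_trans (le_max_left _ _) hr
  have hr0 : (0:ℝ) < r := by linarith
  have hlog1 : 1 ≤ Real.log r := by
    have h3 : Real.exp 1 ≤ 3 := le_trans Real.exp_one_lt_d9.le (by norm_num)
    have h3' : (1:ℝ) ≤ Real.log 3 := (Real.le_log_iff_exp_le (by norm_num)).mpr h3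
    exact le_trans h3' (Real.log_le_log (by norm_num) hr3)
  set A : ℝ := (r:ℝ) ^ (-β) with hAdef
  have hA0 : 0 ≤ A := Real.rpow_nonneg hr0.le _
  have hrB : Real.exp ((Real.log B)^2) ≤ r :=
    le_trans (le_trans (le_max_left _ _) (le_max_right 3 _)) hr
  have hlogB2 : (Real.log B)^2 ≤ Real.log r := by
    have := Real.log_le_log (Real.exp_pos _) hrB
    rwa [Real.log_exp] at this
  have hrP : (4/bK) ^ ((1:ℝ)/(β-1)) ≤ r :=
    le_trans (le_trans (le_max_right _ _) (le_max_right 3 _)) hr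
  -- q lst facts
  have hqr : (r:ℝ) < q ⟨k-1, hk'⟩ := by exact_mod_cast hqlst
  have hqB : (q ⟨k-1, hk'⟩ : ℝ) < B * r := by
    have := (hq ⟨k-1, hk'⟩).2.1
    simpa [hBdef, hbKdef, neg_div] using this
  set L : ℝ := Real.log ((q ⟨k-1, hk'⟩ : ℝ) / (r:ℝ)) with hLdef
  have hL0 : 0 < L := Real.log_pos ((one_lt_div hr0).mpr hqr)
  have hLB : L ≤ Real.log B := by
    apply Real.log_le_log (div_pos (lt_trans hr0 hqr) hr0)
    rw [div_le_iff₀ hr0]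
    exact hqB.le
  have hL2 : L^2 ≤ Real.log r := by
    have : L^2 ≤ (Real.log B)^2 := by nlinarith
    linarith
  -- positivity of the ratios
  have hc : ∀ j, 0 < (q j : ℝ) / (r:ℝ) := by
    intro j
    have : (1:ℝ) ≤ (q j : ℝ) := by exact_mod_cast (hq j).1
    exact div_pos (by linarith) hr0
  have hconv : ConvexOn ℝ Set.univ (fun u : ℝ => ∑ j, b j * ((q j : ℝ)/(r:ℝ)) ^ u) :=
    conv_aux b _ (fun j => (hb j).le) hc
  -- gap positivity
  have hgpos : 0 < 1 - A - m := by linarith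
  -- membership extraction
  subst hJ₁; subst hJ₂
  simp only [Set.mem_insert_iff, Set.mem_singleton_iff] at hJ
  have hmem : ∀ α ∈ J, (s ≤ α ∧ α ≤ t) ∧
      |∑ j, b j * ((q j : ℝ)/(r:ℝ)) ^ α - 1| ≤ A := by
    rcases hJ with rfl | rfl <;>
      (intro α hα; simp only [Set.mem_setOf_eq, Set.mem_Icc] at hα; exact ⟨hα.1, hα.2.2⟩)
  have hside : ∀ x ∈ J, ∀ y ∈ J, x ≤ y → y ≤ u₀ ∨ u₀ ≤ x := by
    rcases hJ with rfl | rfl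
    · intro x hx y hy _
      simp only [Set.mem_setOf_eq, Set.mem_Icc] at hy
      exact Or.inl hy.2.1
    · intro x hx y hy _
      simp only [Set.mem_setOf_eq, Set.mem_Icc] at hx
      exact Or.inr hx.2.1
  have main : ∀ x ∈ J, ∀ y ∈ J, x ≤ y → (y - x) * (1 - A - m) ≤ 2 * A * (γ - β) := by
    intro x hx y hy hxy
    obtain ⟨⟨hxs, hxt⟩, hxE⟩ := hmem x hx
    obtain ⟨⟨hys, hyt⟩, hyE⟩ := hmem y hy
    exact key_aux hconv hu₀.1 hu₀.2 hm.symm hA0 hgpos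
      (by linarith) (by linarith) (by linarith) (by linarith)
      hxE hyE hxy (hside x hx y hy hxy)
  constructor
  · -- case (a)
    rintro ⟨hma, hmb⟩
    have hRHS0 : 0 ≤ C * (A * Real.log r / (X * L^2)) := by
      apply mul_nonneg hC0.le
      apply div_nonneg (mul_nonneg hA0 (by linarith))
      exact mul_nonneg (by linarith) (sq_nonneg L)
    apply Metric.diam_le_of_forall_dist_le hRHS0
    have bound : ∀ x ∈ J, ∀ y ∈ J, x ≤ y → y - x ≤ C * (A * Real.log r / (X * L^2)) := by
      intro x hx y hy hxy
      have key := main x hx y hy hxy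
      have hd : 0 ≤ y - x := by linarith
      have hgX : X / 2 ≤ 1 - A - m := by linarith
      have s1 : (y - x) * X ≤ 4 * A * (γ - β) := by
        linarith [mul_le_mul_of_nonneg_left hgX hd]
      have s2 : (y - x) * X * L^2 ≤ 4 * A * (γ - β) * Real.log r := by
        have h0 : 0 ≤ 4 * A * (γ - β) := by positivity
        exact mul_le_mul s1 hL2 (sq_nonneg L) h0
      have s3 : 4 * A * (γ - β) * Real.log r ≤ C * (A * Real.log r) := by
        linarith [mul_le_mul_of_nonneg_right hCa
          (mul_nonneg hA0 (by linarith : (0:ℝ) ≤ Real.log r))]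
      have hX0 : (0:ℝ) < X := by linarith
      rw [← mul_div_assoc, le_div_iff₀ (mul_pos hX0 (pow_pos hL0 2))]
      calc (y - x) * (X * L^2) = (y - x) * X * L^2 := by ring
      _ ≤ 4 * A * (γ - β) * Real.log r := s2
      _ ≤ C * (A * Real.log r) := s3
    intro x hx y hy
    rcases le_total x y with hxy | hxy
    · rw [Real.dist_eq, abs_of_nonpos (by linarith)]
      have := bound x hx y hy hxy; linarith
    · rw [Real.dist_eq, abs_of_nonneg (by linarith)]
      have := bound y hy x hx hxy; linarith
  · -- case (b)
    intro ℓ hℓ1 hℓ2 hmb1 hmb2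
    simp only [← hbKdef] at hmb1 hmb2
    have hℓ1' : (1:ℝ) ≤ (ℓ:ℝ) := by exact_mod_cast hℓ1
    have hℓ0 : (0:ℝ) < ℓ := by linarith
    -- r * A ≤ bK / 4
    have hpow : 4/bK ≤ (r:ℝ) ^ (β - 1) := by
      have hb1 : (0:ℝ) ≤ 4/bK := by positivity
      have hβ1 : β - 1 ≠ 0 := by linarith
      have hmulc : (1:ℝ)/(β-1) * (β-1) = 1 := by field_simp
      calc 4/bK = ((4:ℝ)/bK) ^ ((1:ℝ)/(β-1) * (β-1)) := by rw [hmulc, Real.rpow_one]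
      _ = ((4/bK) ^ ((1:ℝ)/(β-1))) ^ (β-1) := Real.rpow_mul hb1 _ _
      _ ≤ (r:ℝ) ^ (β-1) := Real.rpow_le_rpow (Real.rpow_nonneg hb1 _) hrP (by linarith)
    have hrA : (r:ℝ) * A ≤ bK / 4 := by
      have h1 : (r:ℝ) * A = (r:ℝ) ^ (1 - β) := by
        rw [hAdef, show (1:ℝ) - β = 1 + (-β) by ring, Real.rpow_add hr0, Real.rpow_one]
      have h2 : (r:ℝ) ^ (1 - β) = ((r:ℝ) ^ (β - 1))⁻¹ := by
        rw [← Real.rpow_neg hr0.le]; ring_nf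
      have h3 : ((r:ℝ) ^ (β - 1))⁻¹ ≤ (4/bK)⁻¹ := by
        apply inv_anti₀ (by positivity) hpow
      rw [h1, h2]
      calc ((r:ℝ) ^ (β - 1))⁻¹ ≤ (4/bK)⁻¹ := h3
      _ = bK / 4 := by rw [inv_div]
    have hAb : A ≤ bK / (4 * r) := by
      rw [le_div_iff₀ (by positivity)]
      linarith
    have hgb : (ℓ:ℝ) * bK / (4 * r) ≤ 1 - A - m := by
      have hA' : A ≤ (ℓ:ℝ) * bK / (4 * r) := by
        calc A ≤ bK / (4 * r) := hAb
        _ ≤ (ℓ:ℝ) * bK / (4 * r) := by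
            rw [div_le_div_iff₀ (by positivity) (by positivity)]
            linarith [mul_le_mul_of_nonneg_right hℓ1' (by positivity : (0:ℝ) ≤ bK * (4*(r:ℝ)))]
      have : (ℓ:ℝ) * bK / (2 * r) ≤ 1 - m := by linarith
      have hhalf : (ℓ:ℝ) * bK / (4 * r) + (ℓ:ℝ) * bK / (4 * r) = (ℓ:ℝ) * bK / (2 * r) := by
        ring
      linarith
    have hRHS0 : 0 ≤ C * ((r:ℝ)^(-β+1) * Real.log r / ((ℓ:ℝ) * L^2)) := by
      apply mul_nonneg hC0.le
      apply div_nonneg (mul_nonneg (Real.rpow_nonneg hr0.le _) (by linarith))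
      exact mul_nonneg hℓ0.le (sq_nonneg L)
    apply Metric.diam_le_of_forall_dist_le hRHS0
    have hrpow : (r:ℝ)^(-β+1) = A * r := by
      rw [hAdef, Real.rpow_add hr0, Real.rpow_one]
    have bound : ∀ x ∈ J, ∀ y ∈ J, x ≤ y →
        y - x ≤ C * ((r:ℝ)^(-β+1) * Real.log r / ((ℓ:ℝ) * L^2)) := by
      intro x hx y hy hxy
      have key := main x hx y hy hxy
      have hd : 0 ≤ y - x := by linarith
      have b1 : (y - x) * ((ℓ:ℝ) * bK) ≤ 8 * (A * (γ-β) * r) := by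
        have h := le_trans (mul_le_mul_of_nonneg_left hgb hd) key
        rw [mul_div_assoc'] at h
        rw [div_le_iff₀ (by positivity : (0:ℝ) < 4 * (r:ℝ))] at h
        linarith
      have b2 : (y - x) * ((ℓ:ℝ) * bK) * L^2 ≤ 8 * (A * (γ-β) * r) * Real.log r := by
        exact mul_le_mul b1 hL2 (sq_nonneg L) (by positivity)
      have b3 : 8 * (A * (γ-β) * r) * Real.log r ≤ C * bK * (A * r * Real.log r) := by
        have h0 : 0 ≤ A * r * Real.log r := by
          apply mul_nonneg (by positivity) (by linarith)
        linarith [mul_le_mul_of_nonneg_right hCb h0]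
      rw [hrpow, ← mul_div_assoc, le_div_iff₀ (mul_pos hℓ0 (pow_pos hL0 2))]
      have b4 : ((y-x) * ((ℓ:ℝ) * L^2)) * bK ≤ (C * (A * r * Real.log r)) * bK := by
        linarith [b2, b3]
      exact le_of_mul_le_mul_right b4 hbK0
    intro x hx y hy
    rcases le_total x y with hxy | hxy
    · rw [Real.dist_eq, abs_of_nonpos (by linarith)]
      have := bound x hx y hy hxy; linarith
    · rw [Real.dist_eq, abs_of_nonneg (by linarith)]
      have := bound y hy x hx hxy; linarith
end
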